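/- Let θ ∈ (0,1) and let M, M', L, c, G, c' be positive reals. Let h : ℝ → ℝ be differentiable with |h'(a)| ≤ L and |h'(a) − h'(b)| ≤ c |a − b|^θ for all a, b ∈ [−M', M'], and let g : ℝ → ℝ satisfy |g(a)| ≤ G for all a and |g(a) − g(b)| ≤ c' |a − b|^θ for all a, b ∈ [0,M]. Then there exists K > 0, depending only on θ, M, M', L, c, G, c', such that for all continuously differentiable u, v : [0,π] → ℝ with u(0) = v(0) = 0, sup_{t∈[0,π]} |u(t)| ≤ M', sup_{t∈[0,π]} |v(t)| ≤ M', ( ∫₀^π u'(t)² dt )^{1/2} ≤ M and ( ∫₀^π v'(t)² dt )^{1/2} ≤ M, one has ∫₀^π | h'(u(t)) u'(t) g( (∫₀^π u'²)^{1/2} ) − h'(v(t)) v'(t) g( (∫₀^π v'²)^{1/2} ) |² dt ≤ K ( ∫₀^π |u'(t) − v'(t)|² dt )^θ. (This is the key estimate showing that u ↦ h(u) · g(|u|_{H¹₀}) is locally θ-Hölder continuous from H¹₀(0,π) into itself, where |u|_{H¹₀} = ‖u'‖_{L²(0,π)}.) -/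

import Mathlib

open MeasureTheory Set Filter

set_option maxHeartbeats 2000000

section Helpers

lemma my_rpow_half_sq {x : ℝ} (hx : 0 ≤ x) : (x ^ ((1:ℝ)/2)) ^ 2 = x := by
  rw [← Real.rpow_natCast (x ^ ((1:ℝ)/2)) 2, ← Real.rpow_mul hx]
  norm_num

lemma my_sq_rpow_half {y : ℝ} (hy : 0 ≤ y) : ((y ^ 2 : ℝ)) ^ ((1:ℝ)/2) = y := by
  rw [← Real.rpow_natCast y 2, ← Real.rpow_mul hy]
  norm_num

lemma my_self_le_rpow_mul {x B θ : ℝ} (hx : 0 ≤ x) (hxB : x ≤ B) (hθ0 : 0 < θ) (hθ1 : θ < 1) :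
    x ≤ B ^ (1 - θ) * x ^ θ := by
  rcases eq_or_lt_of_le hx with h | h
  · rw [← h, Real.zero_rpow hθ0.ne', mul_zero]
  · calc x = x ^ ((1 - θ) + θ) := by norm_num
      _ = x ^ (1 - θ) * x ^ θ := Real.rpow_add h _ _
      _ ≤ B ^ (1 - θ) * x ^ θ := by
          have h1θ : (0:ℝ) ≤ 1 - θ := by linarith
          exact mul_le_mul_of_nonneg_right (Real.rpow_le_rpow hx hxB h1θ)
            (Real.rpow_nonneg hx θ)

lemma my_sum3_sq {A B C : ℝ} : (A + B + C) ^ 2 ≤ 3 * (A ^ 2 + B ^ 2 + C ^ 2) := by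
  nlinarith [sq_nonneg (A - B), sq_nonneg (A - C), sq_nonneg (B - C)]

lemma my_cs {α : Type*} [MeasurableSpace α] {μ : Measure α} {f g : α → ℝ}
    (hf : MemLp f 2 μ) (hg : MemLp g 2 μ) :
    ∫ a, f a * g a ∂μ ≤
      (∫ a, f a ^ 2 ∂μ) ^ ((1:ℝ)/2) * (∫ a, g a ^ 2 ∂μ) ^ ((1:ℝ)/2) := by
  have h2 : (ENNReal.ofReal (2:ℝ)) = 2 := by norm_num
  have hconj : Real.HolderConjugate 2 2 := by constructor <;> norm_num
  have hf' : MemLp (fun a => |f a|) (ENNReal.ofReal 2) μ := by rw [h2]; exact hf.abs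
  have hg' : MemLp (fun a => |g a|) (ENNReal.ofReal 2) μ := by rw [h2]; exact hg.abs
  have key := integral_mul_le_Lp_mul_Lq_of_nonneg hconj
    (Eventually.of_forall fun a => abs_nonneg (f a))
    (Eventually.of_forall fun a => abs_nonneg (g a)) hf' hg'
  have e1 : ∀ (x : ℝ), |x| ^ (2:ℝ) = x ^ 2 := by
    intro x
    rw [show (2:ℝ) = ((2:ℕ):ℝ) by norm_num, Real.rpow_natCast, sq_abs]
  calc ∫ a, f a * g a ∂μ ≤ |∫ a, f a * g a ∂μ| := le_abs_self _
    _ ≤ ∫ a, |f a| * |g a| ∂μ := by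
        simpa [Real.norm_eq_abs, abs_mul] using
          norm_integral_le_integral_norm (fun a => f a * g a) (μ := μ)
    _ ≤ (∫ a, |f a| ^ (2:ℝ) ∂μ) ^ ((1:ℝ)/2) * (∫ a, |g a| ^ (2:ℝ) ∂μ) ^ ((1:ℝ)/2) := key
    _ = (∫ a, f a ^ 2 ∂μ) ^ ((1:ℝ)/2) * (∫ a, g a ^ 2 ∂μ) ^ ((1:ℝ)/2) := by
        simp_rw [e1]

lemma my_integrable_mul_of_memLp2 {α : Type*} [MeasurableSpace α] {μ : Measure α} {f g : α → ℝ}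
    (hf : MemLp f 2 μ) (hg : MemLp g 2 μ) :
    Integrable (fun a => f a * g a) μ := by
  refine Integrable.mono' ((hf.integrable_sq.add hg.integrable_sq).const_mul (1/2))
    (hf.1.mul hg.1) (Eventually.of_forall fun a => ?_)
  simp only [Pi.add_apply]
  rw [Real.norm_eq_abs, abs_mul]
  nlinarith [sq_nonneg (|f a| - |g a|), sq_abs (f a), sq_abs (g a), abs_nonneg (f a),
    abs_nonneg (g a)]

lemma my_l2_tri {α : Type*} [MeasurableSpace α] {μ : Measure α} {f g : α → ℝ}
    (hf : MemLp f 2 μ) (hg : MemLp g 2 μ) :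
    (∫ a, (f a + g a) ^ 2 ∂μ) ^ ((1:ℝ)/2) ≤
      (∫ a, f a ^ 2 ∂μ) ^ ((1:ℝ)/2) + (∫ a, g a ^ 2 ∂μ) ^ ((1:ℝ)/2) := by
  have hIf : 0 ≤ ∫ a, f a ^ 2 ∂μ := integral_nonneg fun a => sq_nonneg _
  have hIg : 0 ≤ ∫ a, g a ^ 2 ∂μ := integral_nonneg fun a => sq_nonneg _
  set F := (∫ a, f a ^ 2 ∂μ) ^ ((1:ℝ)/2) with hF
  set G := (∫ a, g a ^ 2 ∂μ) ^ ((1:ℝ)/2) with hG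
  have hF0 : 0 ≤ F := Real.rpow_nonneg hIf _
  have hG0 : 0 ≤ G := Real.rpow_nonneg hIg _
  have Ifg : Integrable (fun a => f a * g a) μ := my_integrable_mul_of_memLp2 hf hg
  have expand : ∫ a, (f a + g a) ^ 2 ∂μ =
      (∫ a, f a ^ 2 ∂μ) + 2 * (∫ a, f a * g a ∂μ) + ∫ a, g a ^ 2 ∂μ := by
    calc ∫ a, (f a + g a) ^ 2 ∂μ
        = ∫ a, (f a ^ 2 + 2 * (f a * g a)) + g a ^ 2 ∂μ :=
          integral_congr_ae (Eventually.of_forall fun a => by ring)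
      _ = (∫ a, f a ^ 2 + 2 * (f a * g a) ∂μ) + ∫ a, g a ^ 2 ∂μ :=
          integral_add (hf.integrable_sq.add (Ifg.const_mul 2)) hg.integrable_sq
      _ = ((∫ a, f a ^ 2 ∂μ) + ∫ a, 2 * (f a * g a) ∂μ) + ∫ a, g a ^ 2 ∂μ := by
          rw [integral_add hf.integrable_sq (Ifg.const_mul 2)]
      _ = (∫ a, f a ^ 2 ∂μ) + 2 * (∫ a, f a * g a ∂μ) + ∫ a, g a ^ 2 ∂μ := by
          rw [integral_const_mul]
  have key : ∫ a, (f a + g a) ^ 2 ∂μ ≤ (F + G) ^ 2 := by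
    have := my_cs hf hg
    rw [expand]
    nlinarith [my_rpow_half_sq hIf, my_rpow_half_sq hIg]
  calc (∫ a, (f a + g a) ^ 2 ∂μ) ^ ((1:ℝ)/2) ≤ ((F + G) ^ 2) ^ ((1:ℝ)/2) :=
        Real.rpow_le_rpow (integral_nonneg fun a => sq_nonneg _) key (by norm_num)
    _ = F + G := my_sq_rpow_half (by linarith)

lemma my_int3 {α : Type*} [MeasurableSpace α] {μ : Measure α} {f g k : α → ℝ}
    (hf : Integrable f μ) (hg : Integrable g μ) (hk : Integrable k μ) (A B C : ℝ) :
    ∫ x, 3 * (A * f x + B * g x + C * k x) ∂μ =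
      3 * (A * (∫ x, f x ∂μ) + B * (∫ x, g x ∂μ) + C * (∫ x, k x ∂μ)) := by
  rw [integral_const_mul]
  congr 1
  calc ∫ x, (A * f x + B * g x) + C * k x ∂μ
      = (∫ x, A * f x + B * g x ∂μ) + ∫ x, C * k x ∂μ :=
        integral_add ((hf.const_mul A).add (hg.const_mul B)) (hk.const_mul C)
    _ = ((∫ x, A * f x ∂μ) + ∫ x, B * g x ∂μ) + ∫ x, C * k x ∂μ := by
        rw [integral_add (hf.const_mul A) (hg.const_mul B)]
    _ = A * (∫ x, f x ∂μ) + B * (∫ x, g x ∂μ) + C * (∫ x, k x ∂μ) := by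
        rw [integral_const_mul, integral_const_mul, integral_const_mul]

lemma my_integrableOn_of_cont {f : ℝ → ℝ} (hf : ContinuousOn f (Icc 0 Real.pi)) :
    Integrable f (volume.restrict (Set.Ioo 0 Real.pi)) :=
  ((hf.integrableOn_Icc).mono_set Ioo_subset_Icc_self)

lemma my_aesm_of_cont {f : ℝ → ℝ} (hf : ContinuousOn f (Icc 0 Real.pi)) :
    AEStronglyMeasurable f (volume.restrict (Set.Ioo 0 Real.pi)) :=
  (hf.mono Ioo_subset_Icc_self).aestronglyMeasurable measurableSet_Ioo

lemma my_bound_of_cont {f : ℝ → ℝ} (hf : ContinuousOn f (Icc 0 Real.pi)) :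
    ∃ C : ℝ, 0 ≤ C ∧ ∀ t ∈ Icc (0:ℝ) Real.pi, |f t| ≤ C := by
  obtain ⟨C, hC⟩ := isCompact_Icc.exists_bound_of_continuousOn hf
  exact ⟨max C 0, le_max_right _ _, fun t ht => (hC t ht).trans (le_max_left _ _)⟩

instance : IsFiniteMeasure (volume.restrict (Set.Ioo (0:ℝ) Real.pi)) := by
  constructor
  rw [Measure.restrict_apply_univ, Real.volume_Ioo]
  exact ENNReal.ofReal_lt_top

lemma my_memLp2_of_cont {f : ℝ → ℝ} (hf : ContinuousOn f (Icc 0 Real.pi)) :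
    MemLp f 2 (volume.restrict (Set.Ioo 0 Real.pi)) := by
  obtain ⟨C, _, hC⟩ := my_bound_of_cont hf
  exact MemLp.of_bound (my_aesm_of_cont hf) C <| by
    filter_upwards [ae_restrict_mem (μ := volume) measurableSet_Ioo] with t ht
    exact hC t (Ioo_subset_Icc_self ht)

lemma my_poincare {w : ℝ → ℝ} (hw : ContinuousOn w (Icc 0 Real.pi)) {t : ℝ}
    (ht : t ∈ Icc (0:ℝ) Real.pi) :
    |∫ s in (0:ℝ)..t, w s| ≤
      Real.pi ^ ((1:ℝ)/2) * (∫ s in Set.Ioo 0 Real.pi, w s ^ 2) ^ ((1:ℝ)/2) := by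
  have hpi := Real.pi_pos
  have habs : ContinuousOn (fun s => |w s|) (Icc 0 Real.pi) := hw.abs
  have hint : IntegrableOn (fun s => |w s|) (Icc 0 Real.pi) := habs.integrableOn_Icc
  have h1 : |∫ s in (0:ℝ)..t, w s| ≤ ∫ s in (0:ℝ)..t, |w s| :=
    intervalIntegral.abs_integral_le_integral_abs ht.1
  have h2 : (∫ s in (0:ℝ)..t, |w s|) = ∫ s in Ioc (0:ℝ) t, |w s| :=
    intervalIntegral.integral_of_le ht.1
  have h3 : (∫ s in Ioc (0:ℝ) t, |w s|) ≤ ∫ s in Icc (0:ℝ) Real.pi, |w s| := by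
    refine setIntegral_mono_set hint
      (Eventually.of_forall fun s => abs_nonneg _) ?_
    exact HasSubset.Subset.eventuallyLE (Ioc_subset_Icc_self.trans (Icc_subset_Icc_right ht.2))
  have h4 : (∫ s in Icc (0:ℝ) Real.pi, |w s|) = ∫ s in Set.Ioo 0 Real.pi, |w s| :=
    integral_Icc_eq_integral_Ioo
  have h5 : (∫ s in Set.Ioo 0 Real.pi, |w s|) ≤
      Real.pi ^ ((1:ℝ)/2) * (∫ s in Set.Ioo 0 Real.pi, w s ^ 2) ^ ((1:ℝ)/2) := by
    have hcs := my_cs (f := fun _ => (1:ℝ)) (g := fun s => |w s|)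
      (memLp_const 1) ((my_memLp2_of_cont hw).abs)
    simp only [one_mul, one_pow] at hcs
    have e1 : (∫ _ in Set.Ioo (0:ℝ) Real.pi, (1:ℝ)) = Real.pi := by
      simp [Real.volume_Ioo, ENNReal.toReal_ofReal hpi.le, hpi.le]
    have e2 : (∫ s in Set.Ioo (0:ℝ) Real.pi, |w s| ^ 2) = ∫ s in Set.Ioo 0 Real.pi, w s ^ 2 := by
      simp_rw [sq_abs]
    rw [e1, e2] at hcs
    exact hcs
  calc |∫ s in (0:ℝ)..t, w s| ≤ ∫ s in (0:ℝ)..t, |w s| := h1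
    _ = ∫ s in Ioc (0:ℝ) t, |w s| := h2
    _ ≤ ∫ s in Icc (0:ℝ) Real.pi, |w s| := h3
    _ = ∫ s in Set.Ioo 0 Real.pi, |w s| := h4
    _ ≤ _ := h5

end Helpers

/-- Key estimate showing that `u ↦ h(u) · g(|u|_{H¹₀})` is locally `θ`-Hölder continuous from
`H¹₀(0,π)` into itself: there is a constant `K > 0` depending only on
`θ, M, M', L, c, G, c'` such that the stated integral bound holds for all admissible
`h, g, u, v`. -/
theorem stmt_12 (θ M M' L c G c' : ℝ) (hθ0 : 0 < θ) (hθ1 : θ < 1)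
    (hM : 0 < M) (hM' : 0 < M') (hL : 0 < L) (hc : 0 < c) (hG : 0 < G) (hc' : 0 < c') :
    ∃ K : ℝ, 0 < K ∧
      ∀ (h g h' : ℝ → ℝ),
        (∀ a : ℝ, HasDerivAt h (h' a) a) →
        (∀ a ∈ Set.Icc (-M') M', |h' a| ≤ L) →
        (∀ a ∈ Set.Icc (-M') M', ∀ b ∈ Set.Icc (-M') M', |h' a - h' b| ≤ c * |a - b| ^ θ) →
        (∀ a : ℝ, |g a| ≤ G) →
        (∀ a ∈ Set.Icc (0:ℝ) M, ∀ b ∈ Set.Icc (0:ℝ) M, |g a - g b| ≤ c' * |a - b| ^ θ) →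
        ∀ (u v u' v' : ℝ → ℝ),
          (∀ t ∈ Set.Icc (0:ℝ) Real.pi, HasDerivAt u (u' t) t) →
          (∀ t ∈ Set.Icc (0:ℝ) Real.pi, HasDerivAt v (v' t) t) →
          ContinuousOn u' (Set.Icc 0 Real.pi) → ContinuousOn v' (Set.Icc 0 Real.pi) →
          u 0 = 0 → v 0 = 0 →
          (∀ t ∈ Set.Icc (0:ℝ) Real.pi, |u t| ≤ M') →
          (∀ t ∈ Set.Icc (0:ℝ) Real.pi, |v t| ≤ M') →
          (∫ t in Set.Ioo 0 Real.pi, u' t ^ 2) ^ ((1:ℝ)/2) ≤ M →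
          (∫ t in Set.Ioo 0 Real.pi, v' t ^ 2) ^ ((1:ℝ)/2) ≤ M →
          (∫ t in Set.Ioo 0 Real.pi,
              |h' (u t) * u' t * g ((∫ r in Set.Ioo 0 Real.pi, u' r ^ 2) ^ ((1:ℝ)/2)) -
                h' (v t) * v' t * g ((∫ r in Set.Ioo 0 Real.pi, v' r ^ 2) ^ ((1:ℝ)/2))| ^ 2) ≤
            K * (∫ t in Set.Ioo 0 Real.pi, (u' t - v' t) ^ 2) ^ θ := by
  have hpi := Real.pi_pos
  refine ⟨3 * (c^2 * G^2 * Real.pi^θ * M^2 + L^2 * G^2 * (4*M^2)^(1-θ) + L^2 * c'^2 * M^2),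
    by positivity, ?_⟩
  intro h g h' hder hLb hHol hGb hgHol u v u' v' hu hv hcu hcv hu0 hv0 hMu hMv hPu hPv
  have hucont : ContinuousOn u (Icc 0 Real.pi) :=
    fun t ht => ((hu t ht).continuousAt).continuousWithinAt
  have hvcont : ContinuousOn v (Icc 0 Real.pi) :=
    fun t ht => ((hv t ht).continuousAt).continuousWithinAt
  have hwcont : ContinuousOn (fun t => u' t - v' t) (Icc 0 Real.pi) := hcu.sub hcv
  obtain ⟨P, hPdef⟩ : ∃ y : ℝ, y = ∫ t in Set.Ioo (0:ℝ) Real.pi, u' t ^ 2 := ⟨_, rfl⟩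
  obtain ⟨Q, hQdef⟩ : ∃ y : ℝ, y = ∫ t in Set.Ioo (0:ℝ) Real.pi, v' t ^ 2 := ⟨_, rfl⟩
  obtain ⟨X, hXdef⟩ : ∃ y : ℝ, y = ∫ t in Set.Ioo (0:ℝ) Real.pi, (u' t - v' t) ^ 2 := ⟨_, rfl⟩
  rw [← hPdef] at hPu
  rw [← hQdef] at hPv
  rw [← hPdef, ← hQdef, ← hXdef]
  have hP0 : 0 ≤ P := hPdef ▸ integral_nonneg fun t => sq_nonneg _
  have hQ0 : 0 ≤ Q := hQdef ▸ integral_nonneg fun t => sq_nonneg _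
  have hX0 : 0 ≤ X := hXdef ▸ integral_nonneg fun t => sq_nonneg _
  obtain ⟨sP, hsPdef⟩ : ∃ y : ℝ, y = P ^ ((1:ℝ)/2) := ⟨_, rfl⟩
  obtain ⟨sQ, hsQdef⟩ : ∃ y : ℝ, y = Q ^ ((1:ℝ)/2) := ⟨_, rfl⟩
  obtain ⟨sX, hsXdef⟩ : ∃ y : ℝ, y = X ^ ((1:ℝ)/2) := ⟨_, rfl⟩
  rw [← hsPdef] at hPu
  rw [← hsQdef] at hPv
  rw [← hsPdef, ← hsQdef]
  have hsP0 : 0 ≤ sP := hsPdef ▸ Real.rpow_nonneg hP0 _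
  have hsQ0 : 0 ≤ sQ := hsQdef ▸ Real.rpow_nonneg hQ0 _
  have hsX0 : 0 ≤ sX := hsXdef ▸ Real.rpow_nonneg hX0 _
  have hPM : P ≤ M ^ 2 := by
    calc P = sP ^ 2 := by rw [hsPdef]; exact (my_rpow_half_sq hP0).symm
      _ ≤ M ^ 2 := pow_le_pow_left₀ hsP0 hPu 2
  have hQM : Q ≤ M ^ 2 := by
    calc Q = sQ ^ 2 := by rw [hsQdef]; exact (my_rpow_half_sq hQ0).symm
      _ ≤ M ^ 2 := pow_le_pow_left₀ hsQ0 hPv 2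
  have mu' := my_memLp2_of_cont hcu
  have mv' := my_memLp2_of_cont hcv
  have mw := my_memLp2_of_cont hwcont
  have iu2 := mu'.integrable_sq
  have iv2 := mv'.integrable_sq
  have iw2 := mw.integrable_sq
  -- X ≤ 4 M^2
  have hX4 : X ≤ 4 * M ^ 2 := by
    have step : X ≤ ∫ t in Set.Ioo (0:ℝ) Real.pi, (2 * u' t ^ 2 + 2 * v' t ^ 2) := by
      rw [hXdef]
      refine integral_mono iw2 ((iu2.const_mul 2).add (iv2.const_mul 2)) fun t => ?_
      simp only [Pi.add_apply]
      nlinarith [sq_nonneg (u' t + v' t)]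
    rw [integral_add (iu2.const_mul 2) (iv2.const_mul 2), integral_const_mul,
      integral_const_mul, ← hPdef, ← hQdef] at step
    rw [hXdef]
    linarith
  -- Minkowski / reverse triangle
  have tri1 : sP ≤ sQ + sX := by
    rw [hsPdef, hsQdef, hsXdef, hPdef, hQdef, hXdef]
    have e : (∫ t in Set.Ioo (0:ℝ) Real.pi, u' t ^ 2) =
        ∫ t in Set.Ioo (0:ℝ) Real.pi, (v' t + (u' t - v' t)) ^ 2 :=
      integral_congr_ae (Eventually.of_forall fun t => by ring)
    rw [e]
    exact my_l2_tri mv' mw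
  have tri2 : sQ ≤ sP + sX := by
    rw [hsPdef, hsQdef, hsXdef, hPdef, hQdef, hXdef]
    have e : (∫ t in Set.Ioo (0:ℝ) Real.pi, v' t ^ 2) =
        ∫ t in Set.Ioo (0:ℝ) Real.pi, (u' t + (v' t - u' t)) ^ 2 :=
      integral_congr_ae (Eventually.of_forall fun t => by ring)
    have e2 : (∫ t in Set.Ioo (0:ℝ) Real.pi, (u' t - v' t) ^ 2) =
        ∫ t in Set.Ioo (0:ℝ) Real.pi, (v' t - u' t) ^ 2 :=
      integral_congr_ae (Eventually.of_forall fun t => by ring)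
    rw [e, e2]
    exact my_l2_tri mu' (my_memLp2_of_cont (hcv.sub hcu))
  have habsPQ : |sP - sQ| ≤ sX := abs_sub_le_iff.2 ⟨by linarith, by linarith⟩
  -- sup bound
  have hsupUV : ∀ t ∈ Icc (0:ℝ) Real.pi, |u t - v t| ≤ Real.pi ^ ((1:ℝ)/2) * sX := by
    intro t ht
    have hftc : u t - v t = ∫ s in (0:ℝ)..t, (u' s - v' s) := by
      have h1 : (∫ s in (0:ℝ)..t, (u' s - v' s)) = (u t - v t) - (u 0 - v 0) := by
        apply intervalIntegral.integral_eq_sub_of_hasDerivAt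
        · intro s hs
          rw [uIcc_of_le ht.1] at hs
          have hs' : s ∈ Icc (0:ℝ) Real.pi := ⟨hs.1, hs.2.trans ht.2⟩
          exact (hu s hs').sub (hv s hs')
        · apply ContinuousOn.intervalIntegrable
          rw [uIcc_of_le ht.1]
          exact hwcont.mono (Icc_subset_Icc_right ht.2)
      rw [hu0, hv0] at h1
      simpa using h1.symm
    rw [hftc, hsXdef, hXdef]
    simpa using my_poincare hwcont ht
  -- g values
  have hsPM : sP ∈ Icc (0:ℝ) M := ⟨hsP0, hPu⟩
  have hsQM : sQ ∈ Icc (0:ℝ) M := ⟨hsQ0, hPv⟩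
  have hgdiff : |g sP - g sQ| ≤ c' * sX ^ θ :=
    (hgHol _ hsPM _ hsQM).trans
      (mul_le_mul_of_nonneg_left (Real.rpow_le_rpow (abs_nonneg _) habsPQ hθ0.le) hc'.le)
  -- constants
  obtain ⟨a, hadef⟩ : ∃ y : ℝ, y = c * (Real.pi ^ ((1:ℝ)/2) * sX) ^ θ * G := ⟨_, rfl⟩
  obtain ⟨b, hbdef⟩ : ∃ y : ℝ, y = L * G := ⟨_, rfl⟩
  obtain ⟨d, hddef⟩ : ∃ y : ℝ, y = L * (c' * sX ^ θ) := ⟨_, rfl⟩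
  have ha0 : 0 ≤ a := by rw [hadef]; positivity
  have hb0 : 0 ≤ b := by rw [hbdef]; positivity
  have hd0 : 0 ≤ d := by rw [hddef]; positivity
  -- pointwise bound
  have hpt : ∀ t ∈ Set.Ioo (0:ℝ) Real.pi,
      |h' (u t) * u' t * g sP - h' (v t) * v' t * g sQ| ^ 2 ≤
        3 * (a^2 * u' t ^ 2 + b^2 * (u' t - v' t) ^ 2 + d^2 * v' t ^ 2) := by
    intro t ht
    have htI : t ∈ Icc (0:ℝ) Real.pi := Ioo_subset_Icc_self ht
    have hut : u t ∈ Icc (-M') M' := by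
      have := abs_le.1 (hMu t htI); exact ⟨this.1, this.2⟩
    have hvt : v t ∈ Icc (-M') M' := by
      have := abs_le.1 (hMv t htI); exact ⟨this.1, this.2⟩
    have A1 : |h' (u t) - h' (v t)| ≤ c * (Real.pi ^ ((1:ℝ)/2) * sX) ^ θ :=
      (hHol _ hut _ hvt).trans
        (mul_le_mul_of_nonneg_left
          (Real.rpow_le_rpow (abs_nonneg _) (hsupUV t htI) hθ0.le) hc.le)
    have A2 : |h' (v t)| ≤ L := hLb _ hvt
    have A3 : |g sP| ≤ G := hGb _
    have hdecomp : h' (u t) * u' t * g sP - h' (v t) * v' t * g sQ =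
        (h' (u t) - h' (v t)) * u' t * g sP + h' (v t) * (u' t - v' t) * g sP +
          h' (v t) * v' t * (g sP - g sQ) := by ring
    have habs : |h' (u t) * u' t * g sP - h' (v t) * v' t * g sQ| ≤
        a * |u' t| + b * |u' t - v' t| + d * |v' t| := by
      rw [hdecomp]
      refine (abs_add_three _ _ _).trans ?_
      have e1 : |(h' (u t) - h' (v t)) * u' t * g sP| ≤ a * |u' t| := by
        rw [abs_mul, abs_mul, hadef]
        calc |h' (u t) - h' (v t)| * |u' t| * |g sP| ≤
            (c * (Real.pi ^ ((1:ℝ)/2) * sX) ^ θ) * |u' t| * G := by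
              gcongr
          _ = c * (Real.pi ^ ((1:ℝ)/2) * sX) ^ θ * G * |u' t| := by ring
      have e2 : |h' (v t) * (u' t - v' t) * g sP| ≤ b * |u' t - v' t| := by
        rw [abs_mul, abs_mul, hbdef]
        calc |h' (v t)| * |u' t - v' t| * |g sP| ≤ L * |u' t - v' t| * G := by
              gcongr
          _ = L * G * |u' t - v' t| := by ring
      have e3 : |h' (v t) * v' t * (g sP - g sQ)| ≤ d * |v' t| := by
        rw [abs_mul, abs_mul, hddef]
        calc |h' (v t)| * |v' t| * |g sP - g sQ| ≤ L * |v' t| * (c' * sX ^ θ) := by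
              gcongr
          _ = L * (c' * sX ^ θ) * |v' t| := by ring
      linarith
    have sq1 : |h' (u t) * u' t * g sP - h' (v t) * v' t * g sQ| ^ 2 ≤
        (a * |u' t| + b * |u' t - v' t| + d * |v' t|) ^ 2 :=
      pow_le_pow_left₀ (abs_nonneg _) habs 2
    have sq2 : (a * |u' t| + b * |u' t - v' t| + d * |v' t|) ^ 2 ≤
        3 * (a^2 * u' t ^ 2 + b^2 * (u' t - v' t) ^ 2 + d^2 * v' t ^ 2) := by
      calc (a * |u' t| + b * |u' t - v' t| + d * |v' t|) ^ 2 ≤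
          3 * ((a * |u' t|) ^ 2 + (b * |u' t - v' t|) ^ 2 + (d * |v' t|) ^ 2) :=
            my_sum3_sq
        _ = 3 * (a^2 * u' t ^ 2 + b^2 * (u' t - v' t) ^ 2 + d^2 * v' t ^ 2) := by
            simp only [mul_pow, sq_abs]
    linarith
  -- integrability of LHS integrand
  have hmh' : Measurable h' := by
    have : h' = deriv h := funext fun x => ((hder x).deriv).symm
    rw [this]; exact measurable_deriv h
  have hau : AEStronglyMeasurable (fun t => h' (u t)) (volume.restrict (Set.Ioo 0 Real.pi)) :=
    (hmh'.comp_aemeasurable (my_aesm_of_cont hucont).aemeasurable).aestronglyMeasurable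
  have hav : AEStronglyMeasurable (fun t => h' (v t)) (volume.restrict (Set.Ioo 0 Real.pi)) :=
    (hmh'.comp_aemeasurable (my_aesm_of_cont hvcont).aemeasurable).aestronglyMeasurable
  have hFm : AEStronglyMeasurable
      (fun t => h' (u t) * u' t * g sP - h' (v t) * v' t * g sQ)
      (volume.restrict (Set.Ioo 0 Real.pi)) :=
    (((hau.mul (my_aesm_of_cont hcu)).mul_const (g sP)).sub
      ((hav.mul (my_aesm_of_cont hcv)).mul_const (g sQ)))
  obtain ⟨Cu, hCu0, hCu⟩ := my_bound_of_cont hcu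
  obtain ⟨Cv, hCv0, hCv⟩ := my_bound_of_cont hcv
  have hEint : Integrable
      (fun t => |h' (u t) * u' t * g sP - h' (v t) * v' t * g sQ| ^ 2)
      (volume.restrict (Set.Ioo 0 Real.pi)) := by
    have hm2 : AEStronglyMeasurable
        (fun t => |h' (u t) * u' t * g sP - h' (v t) * v' t * g sQ| ^ 2)
        (volume.restrict (Set.Ioo 0 Real.pi)) := by
      have e : (fun t => |h' (u t) * u' t * g sP - h' (v t) * v' t * g sQ| ^ 2) =
          fun t => (h' (u t) * u' t * g sP - h' (v t) * v' t * g sQ) *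
            (h' (u t) * u' t * g sP - h' (v t) * v' t * g sQ) :=
        funext fun t => by rw [sq_abs]; ring
      rw [e]
      exact hFm.mul hFm
    refine Integrable.mono' (integrable_const ((L * Cu * G + L * Cv * G) ^ 2)) hm2 ?_
    filter_upwards [ae_restrict_mem (μ := volume) measurableSet_Ioo] with t ht
    have htI : t ∈ Icc (0:ℝ) Real.pi := Ioo_subset_Icc_self ht
    have hvt : v t ∈ Icc (-M') M' := by
      have := abs_le.1 (hMv t htI); exact ⟨this.1, this.2⟩
    have hut : u t ∈ Icc (-M') M' := by
      have := abs_le.1 (hMu t htI); exact ⟨this.1, this.2⟩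
    have b1 : |h' (u t) * u' t * g sP| ≤ L * Cu * G := by
      rw [abs_mul, abs_mul]
      have h1 := hLb _ hut
      have h2 := hCu t htI
      have h3 := hGb sP
      have h12 : |h' (u t)| * |u' t| ≤ L * Cu := mul_le_mul h1 h2 (abs_nonneg _) hL.le
      exact mul_le_mul h12 h3 (abs_nonneg _) (by positivity)
    have b2 : |h' (v t) * v' t * g sQ| ≤ L * Cv * G := by
      rw [abs_mul, abs_mul]
      have h1 := hLb _ hvt
      have h2 := hCv t htI
      have h3 := hGb sQ
      have h12 : |h' (v t)| * |v' t| ≤ L * Cv := mul_le_mul h1 h2 (abs_nonneg _) hL.le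
      exact mul_le_mul h12 h3 (abs_nonneg _) (by positivity)
    have hEb : |h' (u t) * u' t * g sP - h' (v t) * v' t * g sQ| ≤ L * Cu * G + L * Cv * G :=
      (abs_sub _ _).trans (add_le_add b1 b2)
    rw [Real.norm_eq_abs, abs_of_nonneg (by positivity)]
    exact pow_le_pow_left₀ (abs_nonneg _) hEb 2
  -- integrability of RHS
  have hRint : Integrable
      (fun t => 3 * (a^2 * u' t ^ 2 + b^2 * (u' t - v' t) ^ 2 + d^2 * v' t ^ 2))
      (volume.restrict (Set.Ioo 0 Real.pi)) :=
    ((((iu2.const_mul (a^2)).add (iw2.const_mul (b^2))).add (iv2.const_mul (d^2))).const_mul 3)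
  have hmono :
      (∫ t in Set.Ioo (0:ℝ) Real.pi,
          |h' (u t) * u' t * g sP - h' (v t) * v' t * g sQ| ^ 2) ≤
        ∫ t in Set.Ioo (0:ℝ) Real.pi,
          3 * (a^2 * u' t ^ 2 + b^2 * (u' t - v' t) ^ 2 + d^2 * v' t ^ 2) := by
    refine integral_mono_ae hEint hRint ?_
    filter_upwards [ae_restrict_mem (μ := volume) measurableSet_Ioo] with t ht
    exact hpt t ht
  have hcomp :
      (∫ t in Set.Ioo (0:ℝ) Real.pi,
          3 * (a^2 * u' t ^ 2 + b^2 * (u' t - v' t) ^ 2 + d^2 * v' t ^ 2)) =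
        3 * (a^2 * P + b^2 * X + d^2 * Q) := by
    rw [my_int3 iu2 iw2 iv2 (a^2) (b^2) (d^2), hPdef, hXdef, hQdef]
  -- rpow algebra
  have hsq1 : ((Real.pi ^ ((1:ℝ)/2) * sX) ^ θ) ^ 2 = Real.pi ^ θ * X ^ θ := by
    rw [← Real.rpow_natCast ((Real.pi ^ ((1:ℝ)/2) * sX) ^ θ) 2,
      ← Real.rpow_mul (by positivity)]
    rw [Real.mul_rpow (by positivity) hsX0, hsXdef, ← Real.rpow_mul hpi.le,
      ← Real.rpow_mul hX0]
    congr 1 <;> (congr 1; push_cast; ring)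
  have hsq2 : (sX ^ θ) ^ 2 = X ^ θ := by
    rw [← Real.rpow_natCast (sX ^ θ) 2, ← Real.rpow_mul hsX0, hsXdef, ← Real.rpow_mul hX0]
    congr 1
    push_cast
    ring
  have hXb : X ≤ (4 * M ^ 2) ^ (1 - θ) * X ^ θ := my_self_le_rpow_mul hX0 hX4 hθ0 hθ1
  have hXθ0 : 0 ≤ X ^ θ := Real.rpow_nonneg hX0 θ
  have ea : a ^ 2 = c^2 * G^2 * (Real.pi ^ θ * X ^ θ) := by
    rw [hadef, mul_pow, mul_pow, hsq1]; ring
  have ed : d ^ 2 = L^2 * c'^2 * X ^ θ := by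
    rw [hddef, mul_pow, mul_pow, hsq2]; ring
  calc (∫ t in Set.Ioo (0:ℝ) Real.pi,
          |h' (u t) * u' t * g sP - h' (v t) * v' t * g sQ| ^ 2)
      ≤ ∫ t in Set.Ioo (0:ℝ) Real.pi,
          3 * (a^2 * u' t ^ 2 + b^2 * (u' t - v' t) ^ 2 + d^2 * v' t ^ 2) := hmono
    _ = 3 * (a^2 * P + b^2 * X + d^2 * Q) := hcomp
    _ ≤ 3 * (c^2 * G^2 * Real.pi^θ * M^2 + L^2 * G^2 * (4*M^2)^(1-θ) + L^2 * c'^2 * M^2) *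
          X ^ θ := by
        rw [ea, ed, hbdef]
        have t1 : c^2 * G^2 * (Real.pi ^ θ * X ^ θ) * P ≤
            c^2 * G^2 * (Real.pi ^ θ * X ^ θ) * M^2 :=
          mul_le_mul_of_nonneg_left hPM (by positivity)
        have t2 : (L * G)^2 * X ≤ (L * G)^2 * ((4 * M ^ 2) ^ (1 - θ) * X ^ θ) :=
          mul_le_mul_of_nonneg_left hXb (by positivity)
        have t3 : L^2 * c'^2 * X ^ θ * Q ≤ L^2 * c'^2 * X ^ θ * M^2 :=
          mul_le_mul_of_nonneg_left hQM (by positivity)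
        linarith [t1, t2, t3]
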